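/- From every RNFAwtl A one can construct an nr-NFAwtl B with L(B) = L(A); moreover, if A is deterministic then B is deterministic. Hence ℒ(RNFAwtl) ⊆ ℒ(nr-NFAwtl) and ℒ(RDFAwtl) ⊆ ℒ(nr-DFAwtl). -/

import Mathlib

/-- A nondeterministic finite automaton with translucent letters (NFAwtl). -/
structure NFAwtl (Q α : Type) where
  τ : Q → Set α
  I : Set Q
  F : Set Q
  δ : Q → α → Set Q
  tr : ∀ q a, a ∈ τ q → δ q a = ∅

namespace NFAwtl

variable {Q α : Type}

/-- One computation step of an NFAwtl: delete the leftmost non-translucent letter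
and change state (the head returns to the left end). -/
def Step (A : NFAwtl Q α) : Q × List α → Q × List α → Prop := fun c c' =>
  ∃ u a v, c.2 = u ++ a :: v ∧ (∀ x ∈ u, x ∈ A.τ c.1) ∧ a ∉ A.τ c.1 ∧
    c'.1 ∈ A.δ c.1 a ∧ c'.2 = u ++ v

/-- Acceptance: from some initial state, reach a configuration whose remaining
letters are all translucent for a final state. -/
def Accepts (A : NFAwtl Q α) (w : List α) : Prop :=
  ∃ q₀ ∈ A.I, ∃ q w', Relation.ReflTransGen A.Step (q₀, w) (q, w') ∧
    (∀ x ∈ w', x ∈ A.τ q) ∧ q ∈ A.F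

def lang (A : NFAwtl Q α) : Set (List α) := { w | A.Accepts w }

/-- A DFAwtl: single initial state and at most one transition per state/letter. -/
def Deterministic (A : NFAwtl Q α) : Prop :=
  (∃ q₀, A.I = {q₀}) ∧ ∀ q a, (A.δ q a).Subsingleton

end NFAwtl

/-- A repetitive NFAwtl (RNFAwtl): on the end-of-tape marker it may accept
(states in `Facc`) or change state via `δend` and continue. -/
structure RNFAwtl (Q α : Type) where
  τ : Q → Set α
  I : Set Q
  δ : Q → α → Set Q
  δend : Q → Set Q
  Facc : Set Q
  tr : ∀ q a, a ∈ τ q → δ q a = ∅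
  accEnd : ∀ q, q ∈ Facc → δend q = ∅

namespace RNFAwtl

variable {Q α : Type}

/-- One computation step of an RNFAwtl: either delete the leftmost
non-translucent letter, or, when all remaining letters are translucent,
change state via a `◁`-transition and continue. -/
def Step (A : RNFAwtl Q α) : Q × List α → Q × List α → Prop := fun c c' =>
  (∃ u a v, c.2 = u ++ a :: v ∧ (∀ x ∈ u, x ∈ A.τ c.1) ∧ a ∉ A.τ c.1 ∧
    c'.1 ∈ A.δ c.1 a ∧ c'.2 = u ++ v)
  ∨ ((∀ x ∈ c.2, x ∈ A.τ c.1) ∧ c'.1 ∈ A.δend c.1 ∧ c'.2 = c.2)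

def Accepts (A : RNFAwtl Q α) (w : List α) : Prop :=
  ∃ q₀ ∈ A.I, ∃ q w', Relation.ReflTransGen A.Step (q₀, w) (q, w') ∧
    (∀ x ∈ w', x ∈ A.τ q) ∧ q ∈ A.Facc

def lang (A : RNFAwtl Q α) : Set (List α) := { w | A.Accepts w }

/-- An RDFAwtl: single initial state and deterministic transitions. -/
def Deterministic (A : RNFAwtl Q α) : Prop :=
  (∃ q₀, A.I = {q₀}) ∧ (∀ q a, (A.δ q a).Subsingleton) ∧ ∀ q, (A.δend q).Subsingleton

end RNFAwtl

/-- A non-returning repetitive NFAwtl (nr-NFAwtl): the head continues from the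
position of the last deleted letter; on the end-of-tape marker it may change
state and return the head to the left end. -/
structure NrNFAwtl (Q α : Type) where
  τ : Q → Set α
  I : Set Q
  δ : Q → α → Set Q
  δend : Q → Set Q
  Facc : Set Q
  tr : ∀ q a, a ∈ τ q → δ q a = ∅
  accEnd : ∀ q, q ∈ Facc → δend q = ∅

namespace NrNFAwtl

variable {Q α : Type}

/-- Configurations are `(x, q, w)`: `x` is the already-skipped prefix, the head
is on the first letter of `w`. -/
def Step (A : NrNFAwtl Q α) :
    List α × Q × List α → List α × Q × List α → Prop := fun c c' =>
  (∃ u a v, c.2.2 = u ++ a :: v ∧ (∀ x ∈ u, x ∈ A.τ c.2.1) ∧ a ∉ A.τ c.2.1 ∧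
    c'.2.1 ∈ A.δ c.2.1 a ∧ c'.1 = c.1 ++ u ∧ c'.2.2 = v)
  ∨ ((∀ x ∈ c.2.2, x ∈ A.τ c.2.1) ∧ c'.2.1 ∈ A.δend c.2.1 ∧ c'.1 = [] ∧
    c'.2.2 = c.1 ++ c.2.2)

def Accepts (A : NrNFAwtl Q α) (w : List α) : Prop :=
  ∃ q₀ ∈ A.I, ∃ x q w', Relation.ReflTransGen A.Step ([], q₀, w) (x, q, w') ∧
    (∀ y ∈ w', y ∈ A.τ q) ∧ q ∈ A.Facc

def lang (A : NrNFAwtl Q α) : Set (List α) := { w | A.Accepts w }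

def Deterministic (A : NrNFAwtl Q α) : Prop :=
  (∃ q₀, A.I = {q₀}) ∧ (∀ q a, (A.δ q a).Subsingleton) ∧ ∀ q, (A.δend q).Subsingleton

end NrNFAwtl

/-- A non-repetitive non-returning NFAwtl (nr-nr-NFAwtl): non-returning, and it
must halt as soon as all remaining letters to the right are translucent. -/
structure NrnrNFAwtl (Q α : Type) where
  τ : Q → Set α
  I : Set Q
  F : Set Q
  δ : Q → α → Set Q
  tr : ∀ q a, a ∈ τ q → δ q a = ∅

namespace NrnrNFAwtl

variable {Q α : Type}

def Step (A : NrnrNFAwtl Q α) :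
    List α × Q × List α → List α × Q × List α → Prop := fun c c' =>
  ∃ u a v, c.2.2 = u ++ a :: v ∧ (∀ x ∈ u, x ∈ A.τ c.2.1) ∧ a ∉ A.τ c.2.1 ∧
    c'.2.1 ∈ A.δ c.2.1 a ∧ c'.1 = c.1 ++ u ∧ c'.2.2 = v

def Accepts (A : NrnrNFAwtl Q α) (w : List α) : Prop :=
  ∃ q₀ ∈ A.I, ∃ x q w', Relation.ReflTransGen A.Step ([], q₀, w) (x, q, w') ∧
    (∀ y ∈ w', y ∈ A.τ q) ∧ q ∈ A.F

def lang (A : NrnrNFAwtl Q α) : Set (List α) := { w | A.Accepts w }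

def Deterministic (A : NrnrNFAwtl Q α) : Prop :=
  (∃ q₀, A.I = {q₀}) ∧ ∀ q a, (A.δ q a).Subsingleton

end NrnrNFAwtl

/-- Language classes. -/
def NFAwtlLangs (α : Type) [Fintype α] : Set (Set (List α)) :=
  { L | ∃ (Q : Type) (_ : Fintype Q) (A : NFAwtl Q α), A.lang = L }

def DFAwtlLangs (α : Type) [Fintype α] : Set (Set (List α)) :=
  { L | ∃ (Q : Type) (_ : Fintype Q) (A : NFAwtl Q α), A.Deterministic ∧ A.lang = L }

def RNFAwtlLangs (α : Type) [Fintype α] : Set (Set (List α)) :=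
  { L | ∃ (Q : Type) (_ : Fintype Q) (A : RNFAwtl Q α), A.lang = L }

def RDFAwtlLangs (α : Type) [Fintype α] : Set (Set (List α)) :=
  { L | ∃ (Q : Type) (_ : Fintype Q) (A : RNFAwtl Q α), A.Deterministic ∧ A.lang = L }

def NrNFAwtlLangs (α : Type) [Fintype α] : Set (Set (List α)) :=
  { L | ∃ (Q : Type) (_ : Fintype Q) (A : NrNFAwtl Q α), A.lang = L }

def NrDFAwtlLangs (α : Type) [Fintype α] : Set (Set (List α)) :=
  { L | ∃ (Q : Type) (_ : Fintype Q) (A : NrNFAwtl Q α), A.Deterministic ∧ A.lang = L }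

def NrnrNFAwtlLangs (α : Type) [Fintype α] : Set (Set (List α)) :=
  { L | ∃ (Q : Type) (_ : Fintype Q) (A : NrnrNFAwtl Q α), A.lang = L }

def NrnrDFAwtlLangs (α : Type) [Fintype α] : Set (Set (List α)) :=
  { L | ∃ (Q : Type) (_ : Fintype Q) (A : NrnrNFAwtl Q α), A.Deterministic ∧ A.lang = L }

/-- The three-letter alphabet {a, b, c}. -/
inductive Al : Type
  | a | b | c
deriving DecidableEq

instance : Fintype Al :=
  ⟨{Al.a, Al.b, Al.c}, fun x => by cases x <;> simp⟩

/-! Each deletion of `A` is simulated by `B` deleting the same letter and entering a primed copy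
`inr p` of the target state, for which every letter is translucent: the head sweeps to `◁` and
returns to the left end in the state `inl p`. Hence every configuration of `B` in an unprimed state
has its head at the left end, and merging head position and prime yields a run of `A`. -/

namespace RNFAwtl

open Relation

variable {Q α : Type} (A : RNFAwtl Q α)

def toNrNFAwtl : NrNFAwtl (Q ⊕ Q) α where
  τ := Sum.elim A.τ fun _ => Set.univ
  I := Sum.inl '' A.I
  δ := Sum.elim (fun q a => Sum.inr '' A.δ q a) fun _ _ => ∅
  δend := Sum.elim (fun q => Sum.inl '' A.δend q) fun p => {Sum.inl p}
  Facc := Sum.inl '' A.Facc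
  tr := by
    rintro (q | q) a h
    · simp [A.tr q a h]
    · rfl
  accEnd := by
    rintro _ ⟨q, hq, rfl⟩
    simp [A.accEnd q hq]

def toRConfig : List α × (Q ⊕ Q) × List α → Q × List α
  | (x, q, y) => (Sum.elim id id q, x ++ y)

def UnprimedAtLeftEnd (c : List α × (Q ⊕ Q) × List α) : Prop :=
  c.2.1.isLeft → c.1 = []

lemma toNrNFAwtl_reflTransGen_of_step {c c' : Q × List α} (h : A.Step c c') :
    ReflTransGen A.toNrNFAwtl.Step ([], Sum.inl c.1, c.2) ([], Sum.inl c'.1, c'.2) := by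
  rcases h with ⟨u, a, v, hw, hu, ha, hδ, hw'⟩ | ⟨hall, hδ, hw'⟩
  · refine ReflTransGen.head (b := (u, Sum.inr c'.1, v)) ?delete (ReflTransGen.single ?sweep)
    case delete => exact Or.inl ⟨u, a, v, hw, hu, ha, ⟨c'.1, hδ, rfl⟩, by simp, rfl⟩
    case sweep => exact Or.inr ⟨fun _ _ => trivial, rfl, rfl, hw'⟩
  · exact ReflTransGen.single (Or.inr ⟨hall, ⟨c'.1, hδ, rfl⟩, rfl, by simpa⟩)

lemma toNrNFAwtl_reflTransGen_of_reflTransGen {c c' : Q × List α}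
    (h : ReflTransGen A.Step c c') :
    ReflTransGen A.toNrNFAwtl.Step ([], Sum.inl c.1, c.2) ([], Sum.inl c'.1, c'.2) :=
  h.lift' (fun c => ([], Sum.inl c.1, c.2)) fun _ _ => A.toNrNFAwtl_reflTransGen_of_step

lemma reflGen_step_toRConfig_of_toNrNFAwtl_step {c c' : List α × (Q ⊕ Q) × List α}
    (hc : UnprimedAtLeftEnd c) (h : A.toNrNFAwtl.Step c c') :
    ReflGen A.Step (toRConfig c) (toRConfig c') ∧ UnprimedAtLeftEnd c' := by
  obtain ⟨x, q | p, y⟩ := c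
  all_goals
    obtain ⟨x', q', y'⟩ := c'
    simp only [NrNFAwtl.Step, UnprimedAtLeftEnd] at h hc
    rcases h with ⟨u, a, v, rfl, hu, ha, hδ, rfl, rfl⟩ | ⟨hall, hδ, rfl, rfl⟩
  · obtain ⟨p, hp, rfl⟩ := hδ
    obtain rfl : x = [] := hc rfl
    exact ⟨ReflGen.single (Or.inl ⟨_, _, _, rfl, hu, ha, hp, rfl⟩), nofun⟩
  · obtain ⟨p, hp, rfl⟩ := hδ
    obtain rfl : x = [] := hc rfl
    exact ⟨ReflGen.single (Or.inr ⟨hall, hp, rfl⟩), fun _ => rfl⟩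
  · exact absurd trivial ha
  · obtain rfl : q' = Sum.inl p := hδ
    exact ⟨ReflGen.refl, fun _ => rfl⟩

lemma reflTransGen_toRConfig_of_toNrNFAwtl {q₀ : Q} {w : List α}
    {c : List α × (Q ⊕ Q) × List α}
    (h : ReflTransGen A.toNrNFAwtl.Step ([], Sum.inl q₀, w) c) :
    ReflTransGen A.Step (q₀, w) (toRConfig c) ∧ UnprimedAtLeftEnd c := by
  induction h with
  | refl => exact ⟨ReflTransGen.refl, fun _ => rfl⟩
  | tail _ hstep ih =>
    obtain ⟨hrun, hc⟩ := ih
    obtain ⟨hstep', hc'⟩ := A.reflGen_step_toRConfig_of_toNrNFAwtl_step hc hstep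
    exact ⟨hrun.trans (reflGen_le_reflTransGen _ _ hstep'), hc'⟩

lemma toNrNFAwtl_lang : A.toNrNFAwtl.lang = A.lang := by
  ext w
  constructor
  · rintro ⟨_, ⟨q₀, hq₀, rfl⟩, x, _, w', hrun, htr, ⟨qf, hqf, rfl⟩⟩
    obtain ⟨hrun', hx⟩ := A.reflTransGen_toRConfig_of_toNrNFAwtl hrun
    obtain rfl : x = [] := hx rfl
    exact ⟨q₀, hq₀, qf, w', hrun', htr, hqf⟩
  · rintro ⟨q₀, hq₀, q, w', hrun, htr, hq⟩
    exact ⟨Sum.inl q₀, ⟨q₀, hq₀, rfl⟩, [], Sum.inl q, w',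
      A.toNrNFAwtl_reflTransGen_of_reflTransGen hrun, htr, ⟨q, hq, rfl⟩⟩

lemma Deterministic.toNrNFAwtl {A : RNFAwtl Q α} (h : A.Deterministic) :
    A.toNrNFAwtl.Deterministic := by
  obtain ⟨⟨q₀, hq₀⟩, hδ, hδend⟩ := h
  refine ⟨⟨Sum.inl q₀, by simp [RNFAwtl.toNrNFAwtl, hq₀]⟩, ?_, ?_⟩
  · rintro (q | q) a
    · exact (hδ q a).image _
    · exact Set.subsingleton_empty
  · rintro (q | q)
    · exact (hδend q).image _
    · exact Set.subsingleton_singleton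

end RNFAwtl

/-- every RNFAwtl can be converted into an equivalent nr-NFAwtl,
preserving determinism; hence ℒ(RNFAwtl) ⊆ ℒ(nr-NFAwtl) and
ℒ(RDFAwtl) ⊆ ℒ(nr-DFAwtl). -/
theorem RNFAwtl_to_nrNFAwtl (α : Type) [Fintype α] :
    (∀ (Q : Type) [Fintype Q] (A : RNFAwtl Q α),
      ∃ (Q' : Type) (_ : Fintype Q') (B : NrNFAwtl Q' α),
        B.lang = A.lang ∧ (A.Deterministic → B.Deterministic)) ∧
    RNFAwtlLangs α ⊆ NrNFAwtlLangs α ∧ RDFAwtlLangs α ⊆ NrDFAwtlLangs α := by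
  refine ⟨fun Q _ A => ⟨Q ⊕ Q, inferInstance, A.toNrNFAwtl, A.toNrNFAwtl_lang,
    RNFAwtl.Deterministic.toNrNFAwtl⟩, ?_, ?_⟩
  · rintro L ⟨Q, _, A, rfl⟩
    exact ⟨Q ⊕ Q, inferInstance, A.toNrNFAwtl, A.toNrNFAwtl_lang⟩
  · rintro L ⟨Q, _, A, hA, rfl⟩
    exact ⟨Q ⊕ Q, inferInstance, A.toNrNFAwtl, hA.toNrNFAwtl, A.toNrNFAwtl_lang⟩
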